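/- arXiv:2112.10875 — 2 statements merged into one kernel-verified Lean document; each statement's English description precedes it below -/
import Mathlib

section
/- Let G=(V,E) be a polytree and let (i,j)∈E be an edge. Then every 2×2 minor of the trek-matrix A_{i,j} belongs to the third-order moment ideal I^{≤3}(G). Concretely, under the parametrization of the model, the second row of A_{i,j} equals λ_{ij} times the first row, so A_{i,j} has rank at most one on the model. -/
open MvPolynomial Matrix Finset

namespace LNG

variable {n : ℕ}

/-- A directed path in the directed graph `E`, recorded as the (nonempty) list of
visited vertices. -/
def IsDiPath (E : Fin n → Fin n → Prop) : List (Fin n) → Prop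
  | [] => False
  | [_] => True
  | a :: b :: l => E a b ∧ IsDiPath E (b :: l)

/-- `p` is a directed path from `v` to `i` (possibly of length zero). -/
def IsPathFromTo (E : Fin n → Fin n → Prop) (v : Fin n) (p : List (Fin n)) (i : Fin n) : Prop :=
  IsDiPath E p ∧ p.head? = some v ∧ p.getLast? = some i

/-- A `k`-trek with top `v` between the vertices `i 0, …, i (k-1)`: an ordered collection
of directed paths with common source `v`, where the `r`-th path has sink `i r`. -/
def IsTrek (E : Fin n → Fin n → Prop) {k : ℕ} (v : Fin n)
    (P : Fin k → List (Fin n)) (i : Fin k → Fin n) : Prop :=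
  ∀ r, IsPathFromTo E v (P r) (i r)

/-- A simple `k`-trek: the top is the only vertex lying on all `k` paths. -/
def IsSimpleTrek (E : Fin n → Fin n → Prop) {k : ℕ} (v : Fin n)
    (P : Fin k → List (Fin n)) (i : Fin k → Fin n) : Prop :=
  IsTrek E v P i ∧ ∀ w : Fin n, (∀ r, w ∈ P r) → w = v

/-- A 2-trek with top `v` between `i` and `j`. -/
def IsTrek2 (E : Fin n → Fin n → Prop) (v : Fin n) (p q : List (Fin n)) (i j : Fin n) : Prop :=
  IsPathFromTo E v p i ∧ IsPathFromTo E v q j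

def IsSimpleTrek2 (E : Fin n → Fin n → Prop) (v : Fin n) (p q : List (Fin n))
    (i j : Fin n) : Prop :=
  IsTrek2 E v p q i j ∧ ∀ w : Fin n, w ∈ p → w ∈ q → w = v

/-- A 3-trek with top `v` between `i`, `j` and `k`. -/
def IsTrek3 (E : Fin n → Fin n → Prop) (v : Fin n) (p q r : List (Fin n))
    (i j k : Fin n) : Prop :=
  IsPathFromTo E v p i ∧ IsPathFromTo E v q j ∧ IsPathFromTo E v r k

def IsSimpleTrek3 (E : Fin n → Fin n → Prop) (v : Fin n) (p q r : List (Fin n))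
    (i j k : Fin n) : Prop :=
  IsTrek3 E v p q r i j k ∧ ∀ w : Fin n, w ∈ p → w ∈ q → w ∈ r → w = v

def Trek2Exists (E : Fin n → Fin n → Prop) (i j : Fin n) : Prop :=
  ∃ v p q, IsTrek2 E v p q i j

def Trek3Exists (E : Fin n → Fin n → Prop) (i j k : Fin n) : Prop :=
  ∃ v p q r, IsTrek3 E v p q r i j k

/-- The underlying undirected (simple) graph of the directed graph `E`. -/
def underlying (E : Fin n → Fin n → Prop) : SimpleGraph (Fin n) where
  Adj a b := a ≠ b ∧ (E a b ∨ E b a)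
  symm := ⟨fun a b h => ⟨h.1.symm, h.2.symm⟩⟩
  loopless := ⟨fun a h => h.1 rfl⟩

/-- A polytree: a topologically ordered DAG whose underlying undirected graph is a tree. -/
def IsPolytree (E : Fin n → Fin n → Prop) : Prop :=
  (∀ i j : Fin n, E i j → i < j) ∧ (underlying E).IsTree

/-! ### Variables of the moment polynomial ring -/

abbrev SIdx (n : ℕ) := {p : Fin n × Fin n // p.1 ≤ p.2}
abbrev TIdx (n : ℕ) := {p : Fin n × Fin n × Fin n // p.1 ≤ p.2.1 ∧ p.2.1 ≤ p.2.2}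

/-- Variables `s_{ij}` (`1 ≤ i ≤ j ≤ n`) and `t_{ijk}` (`1 ≤ i ≤ j ≤ k ≤ n`). -/
abbrev MomVar (n : ℕ) := SIdx n ⊕ TIdx n

/-- Parameter variables `a_i`, `b_i` (`i ∈ V`) and `λ_{ij}`. -/
abbrev PVar (n : ℕ) := (Fin n ⊕ Fin n) ⊕ Fin n × Fin n

/-- Median of three. -/
def mid3 (i j k : Fin n) : Fin n := max (min i j) (min (max i j) k)

lemma min3_le_mid3 (i j k : Fin n) : min i (min j k) ≤ mid3 i j k :=
  le_trans (le_min (min_le_left _ _) (le_trans (min_le_right i (min j k)) (min_le_left j k)))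
    (le_max_left _ _)

lemma mid3_le_max3 (i j k : Fin n) : mid3 i j k ≤ max i (max j k) :=
  max_le (le_trans (min_le_left i j) (le_max_left _ _))
    (le_trans (min_le_right (max i j) k) (le_trans (le_max_right j k) (le_max_right i _)))

/-- The variable `s_{ij}` (indices sorted). -/
noncomputable def svar (i j : Fin n) : MvPolynomial (MomVar n) ℝ :=
  X (Sum.inl ⟨(min i j, max i j), min_le_max⟩)

/-- The variable `t_{ijk}` (indices sorted). -/
noncomputable def tvar (i j k : Fin n) : MvPolynomial (MomVar n) ℝ :=
  X (Sum.inr ⟨(min i (min j k), mid3 i j k, max i (max j k)),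
      min3_le_mid3 i j k, mid3_le_max3 i j k⟩)

/-- Evaluation of the moment variables at a concrete pair `(S, T)`. -/
def evalVar (S : Matrix (Fin n) (Fin n) ℝ) (T : Fin n → Fin n → Fin n → ℝ) :
    MomVar n → ℝ
  | Sum.inl p => S p.1.1 p.1.2
  | Sum.inr p => T p.1.1 p.1.2.1 p.1.2.2

/-! ### The third-order moment model -/

/-- `Λ ∈ ℝ^E`. -/
def Supported (E : Fin n → Fin n → Prop) (Λ : Matrix (Fin n) (Fin n) ℝ) : Prop :=
  ∀ i j, ¬ E i j → Λ i j = 0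

/-- Covariance matrix `(I-Λ)^{-T} Ω⁽²⁾ (I-Λ)^{-1}`. -/
noncomputable def momentS (Λ : Matrix (Fin n) (Fin n) ℝ) (ω2 : Fin n → ℝ) :
    Matrix (Fin n) (Fin n) ℝ :=
  ((1 - Λ)⁻¹)ᵀ * Matrix.diagonal ω2 * (1 - Λ)⁻¹

/-- Third moment tensor `Ω⁽³⁾ ∙ (I-Λ)^{-1} ∙ (I-Λ)^{-1} ∙ (I-Λ)^{-1}`. -/
noncomputable def momentT (Λ : Matrix (Fin n) (Fin n) ℝ) (ω3 : Fin n → ℝ)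
    (i j k : Fin n) : ℝ :=
  ∑ a, ω3 a * (1 - Λ)⁻¹ a i * (1 - Λ)⁻¹ a j * (1 - Λ)⁻¹ a k

/-- Membership in the third-order moment model `M^{≤3}(G)`. -/
def MomentModel (E : Fin n → Fin n → Prop)
    (S : Matrix (Fin n) (Fin n) ℝ) (T : Fin n → Fin n → Fin n → ℝ) : Prop :=
  ∃ (Λ : Matrix (Fin n) (Fin n) ℝ) (ω2 ω3 : Fin n → ℝ),
    Supported E Λ ∧ (∀ i, 0 < ω2 i) ∧ S = momentS Λ ω2 ∧ T = momentT Λ ω3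

/-- The third-order moment (vanishing) ideal `I^{≤3}(G)`. -/
noncomputable def momentIdeal (E : Fin n → Fin n → Prop) : Ideal (MvPolynomial (MomVar n) ℝ) where
  carrier := {f | ∀ S T, MomentModel E S T → eval (evalVar S T) f = 0}
  add_mem' := by
    intro f g hf hg S T h
    simp [map_add, hf S T h, hg S T h]
  zero_mem' := by
    intro S T h
    simp
  smul_mem' := by
    intro c f hf S T h
    simp [smul_eq_mul, _root_.map_mul, hf S T h]

/-- A fully symmetric 3-tensor. -/
def SymTensor3 (T : Fin n → Fin n → Fin n → ℝ) : Prop :=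
  ∀ i j k : Fin n, T i j k = T j i k ∧ T i j k = T i k j

/-! ### Trek matrices and their minors -/

/-- `top(i,k) = top(j,k)`: there is a common vertex `v` that is the top of the
simple 2-treks between `i,k` and between `j,k`. -/
def SameTop2 (E : Fin n → Fin n → Prop) (i j k : Fin n) : Prop :=
  ∃ v, (∃ p q, IsSimpleTrek2 E v p q i k) ∧ (∃ p q, IsSimpleTrek2 E v p q j k)

/-- `top(i,l,m) = top(j,l,m)`. -/
def SameTop3 (E : Fin n → Fin n → Prop) (i j l m : Fin n) : Prop :=
  ∃ v, (∃ p q r, IsSimpleTrek3 E v p q r i l m) ∧ (∃ p q r, IsSimpleTrek3 E v p q r j l m)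

/-- `f` is a `2 × 2` minor of the trek-matrix `A_{i,j}`. -/
def IsTrekMinorOf (E : Fin n → Fin n → Prop) (i j : Fin n)
    (f : MvPolynomial (MomVar n) ℝ) : Prop :=
  (∃ k k', SameTop2 E i j k ∧ SameTop2 E i j k' ∧
      f = svar i k * svar j k' - svar j k * svar i k') ∨
  (∃ k l m, SameTop2 E i j k ∧ SameTop3 E i j l m ∧
      f = svar i k * tvar j l m - svar j k * tvar i l m) ∨
  (∃ l m l' m', SameTop3 E i j l m ∧ SameTop3 E i j l' m' ∧
      f = tvar i l m * tvar j l' m' - tvar j l m * tvar i l' m')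

/-- Variables `s_{ij}` with no 2-trek between `i,j` and `t_{ijk}` with no 3-trek. -/
def noTrekVars (E : Fin n → Fin n → Prop) : Set (MvPolynomial (MomVar n) ℝ) :=
  {f | (∃ i j, ¬ Trek2Exists E i j ∧ f = svar i j) ∨
       (∃ i j k, ¬ Trek3Exists E i j k ∧ f = tvar i j k)}

/-- The 2-minors of the trek-matrices `A_{i,j}` over edges `i → j` of `G`. -/
def edgeMinors (E : Fin n → Fin n → Prop) : Set (MvPolynomial (MomVar n) ℝ) :=
  {f | ∃ i j, E i j ∧ IsTrekMinorOf E i j f}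

/-- The 2-minors of all trek-matrices `A_{i,j}`. -/
def allMinors (E : Fin n → Fin n → Prop) : Set (MvPolynomial (MomVar n) ℝ) :=
  {f | ∃ i j, Trek2Exists E i j ∧ IsTrekMinorOf E i j f}

/-! ### The simple trek rule parametrization -/

/-- Product of the edge weights `w` along a path. -/
def pathProd {R : Type*} [CommSemiring R] (w : Fin n → Fin n → R) : List (Fin n) → R
  | [] => 1
  | [_] => 1
  | a :: b :: l => w a b * pathProd w (b :: l)

/-- Sum of a weight over all simple 2-treks between `i` and `j`. -/
noncomputable def trekSum2 {M : Type*} [AddCommMonoid M] (E : Fin n → Fin n → Prop)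
    (wt : Fin n → List (Fin n) → List (Fin n) → M) (i j : Fin n) : M :=
  ∑ᶠ τ : {x : Fin n × List (Fin n) × List (Fin n) //
      IsSimpleTrek2 E x.1 x.2.1 x.2.2 i j}, wt τ.1.1 τ.1.2.1 τ.1.2.2

/-- Sum of a weight over all simple 3-treks between `i`, `j` and `k`. -/
noncomputable def trekSum3 {M : Type*} [AddCommMonoid M] (E : Fin n → Fin n → Prop)
    (wt : Fin n → List (Fin n) → List (Fin n) → List (Fin n) → M) (i j k : Fin n) : M :=
  ∑ᶠ τ : {x : Fin n × List (Fin n) × List (Fin n) × List (Fin n) //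
      IsSimpleTrek3 E x.1 x.2.1 x.2.2.1 x.2.2.2 i j k},
    wt τ.1.1 τ.1.2.1 τ.1.2.2.1 τ.1.2.2.2

/-- The `(i,j)` coordinate of the simple trek rule parametrization `φ_G^*` (covariances). -/
noncomputable def phiS (E : Fin n → Fin n → Prop) (a : Fin n → ℝ)
    (Λ : Matrix (Fin n) (Fin n) ℝ) (i j : Fin n) : ℝ :=
  trekSum2 E (fun v p q => a v * (pathProd (fun x y => Λ x y) p * pathProd (fun x y => Λ x y) q)) i j

/-- The `(i,j,k)` coordinate of the simple trek rule parametrization `φ_G^*` (third moments). -/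
noncomputable def phiT (E : Fin n → Fin n → Prop) (b : Fin n → ℝ)
    (Λ : Matrix (Fin n) (Fin n) ℝ) (i j k : Fin n) : ℝ :=
  trekSum3 E (fun v p q r => b v * (pathProd (fun x y => Λ x y) p *
    pathProd (fun x y => Λ x y) q * pathProd (fun x y => Λ x y) r)) i j k

/-- The ring homomorphism `φ_G` of the simple trek rule. -/
noncomputable def phiG (E : Fin n → Fin n → Prop) :
    MvPolynomial (MomVar n) ℝ →ₐ[ℝ] MvPolynomial (PVar n) ℝ :=
  aeval fun v => match v with
    | Sum.inl p => trekSum2 E (fun v' pl ql =>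
        X (Sum.inl (Sum.inl v')) * (pathProd (fun x y => X (Sum.inr (x, y))) pl *
          pathProd (fun x y => X (Sum.inr (x, y))) ql)) p.1.1 p.1.2
    | Sum.inr p => trekSum3 E (fun v' pl ql rl =>
        X (Sum.inl (Sum.inr v')) * (pathProd (fun x y => X (Sum.inr (x, y))) pl *
          pathProd (fun x y => X (Sum.inr (x, y))) ql *
          pathProd (fun x y => X (Sum.inr (x, y))) rl)) p.1.1 p.1.2.1 p.1.2.2

/-! On a topologically ordered polytree, `N = (1 - Λ)⁻¹` satisfies `N = 1 + N Λ`, so `N a b ≠ 0`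
only if `a` reaches `b`. Delete the edge `i → j`: since the underlying graph is a tree, this splits
it into an `i`-side and a `j`-side. If `top(i,k) = top(j,k)`, the top reaches `i` below `j` and
reaches `k` along a path avoiding `j`, so `k` is on the `i`-side; `top(i,l,m) = top(j,l,m)` puts `l`
or `m` there. A directed path cannot cross from the `j`-side to the `i`-side, so every source `a`
reaching such a vertex lies on the `i`-side, reaches `j` only through `i`, and has
`N a j = λ_{ij} N a i`. Summing over sources, row `j` of the trek-matrix is `λ_{ij}` times row `i`,
which kills every `2 × 2` minor on the model. -/

section TriangularInverse

variable {R ι : Type*} [CommRing R] [Fintype ι] [DecidableEq ι] [LinearOrder ι]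
  {Λ : Matrix ι ι R}

theorem det_one_sub_of_strictUpper (hΛ : ∀ a b, b ≤ a → Λ a b = 0) : (1 - Λ).det = 1 := by
  rw [det_of_isUpperTriangular fun a b (hba : b < a) => by
    rw [Matrix.sub_apply, one_apply_ne hba.ne', hΛ a b hba.le, sub_zero]]
  exact Finset.prod_eq_one fun a _ => by
    rw [Matrix.sub_apply, one_apply_eq, hΛ a a le_rfl, sub_zero]

theorem inv_one_sub_eq_one_add_mul (hΛ : ∀ a b, b ≤ a → Λ a b = 0) :
    (1 - Λ)⁻¹ = 1 + (1 - Λ)⁻¹ * Λ := by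
  have h := nonsing_inv_mul (1 - Λ) (by rw [det_one_sub_of_strictUpper hΛ]; exact isUnit_one)
  rw [Matrix.mul_sub, Matrix.mul_one] at h
  exact eq_add_of_sub_eq h

theorem inv_one_sub_apply (hΛ : ∀ a b, b ≤ a → Λ a b = 0) (a b : ι) :
    (1 - Λ)⁻¹ a b = (1 : Matrix ι ι R) a b + ∑ x, (1 - Λ)⁻¹ a x * Λ x b := by
  conv_lhs => rw [inv_one_sub_eq_one_add_mul hΛ]
  rw [Matrix.add_apply, mul_apply]

theorem reflTransGen_of_inv_one_sub_ne_zero (hΛ : ∀ a b, b ≤ a → Λ a b = 0) {a b : ι}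
    (h : (1 - Λ)⁻¹ a b ≠ 0) : Relation.ReflTransGen (fun x y => Λ x y ≠ 0) a b := by
  induction b using WellFoundedLT.induction with
  | ind b ih =>
    rw [inv_one_sub_apply hΛ] at h
    by_cases hab : a = b
    · exact hab ▸ .refl
    obtain ⟨x, -, hx⟩ := Finset.exists_ne_zero_of_sum_ne_zero
      (by rwa [one_apply_ne hab, zero_add] at h)
    have hxb : Λ x b ≠ 0 := right_ne_zero_of_mul hx
    have hlt : x < b := lt_of_not_ge fun hle => hxb (hΛ x b hle)
    exact (ih x hlt (left_ne_zero_of_mul hx)).tail hxb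

end TriangularInverse

section Paths

open Relation

theorem reflTransGen_avoiding_or_through {α : Type*} {r : α → α → Prop} {x y a b : α}
    (h : ReflTransGen r a b) :
    ReflTransGen (fun c d => r c d ∧ ¬(c = x ∧ d = y)) a b ∨
      (ReflTransGen r a x ∧ ReflTransGen r y b) := by
  induction h with
  | refl => exact .inl .refl
  | @tail c d hac hcd ih =>
    rcases ih with hav | ⟨hax, hyc⟩
    · by_cases hxy : c = x ∧ d = y
      · obtain ⟨rfl, rfl⟩ := hxy
        exact .inr ⟨hac, .refl⟩
      · exact .inl (hav.tail ⟨hcd, hxy⟩)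
    · exact .inr ⟨hax, hyc.tail hcd⟩

theorem IsPathFromTo.reflTransGen {E r : Fin n → Fin n → Prop} {v b : Fin n}
    {p : List (Fin n)} (hp : IsPathFromTo E v p b) (hr : ∀ x y, E x y → y ∈ p → r x y) :
    ReflTransGen r v b := by
  obtain ⟨hpath, hhead, hlast⟩ := hp
  induction p generalizing v with
  | nil => exact hpath.elim
  | cons a l ih =>
    obtain rfl : a = v := by simpa using hhead
    cases l with
    | nil =>
      obtain rfl : a = b := by simpa using hlast
      exact .refl
    | cons c l =>
      exact .head (hr _ _ hpath.1 (by simp))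
        (ih (fun x y hxy hy => hr x y hxy (.tail _ hy)) hpath.2 rfl hlast)

end Paths

def underlyingDeleteEdge (E : Fin n → Fin n → Prop) (i j : Fin n) : SimpleGraph (Fin n) :=
  (underlying E).deleteEdges {s(i, j)}

section EdgeCut

open Relation

variable {E : Fin n → Fin n → Prop} (hE : ∀ a b, E a b → a < b)
include hE

theorem reflTransGen_le_of_topological {a b : Fin n} (h : ReflTransGen E a b) : a ≤ b := by
  induction h with
  | refl => exact le_rfl
  | tail _ hcd ih => exact ih.trans (hE _ _ hcd).le

variable {i j : Fin n} (hij : E i j)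
include hij

theorem underlyingDeleteEdge_reachable {a b : Fin n}
    (h : ReflTransGen (fun c d => E c d ∧ ¬(c = i ∧ d = j)) a b) :
    (underlyingDeleteEdge E i j).Reachable a b := by
  rw [SimpleGraph.reachable_iff_reflTransGen]
  refine ReflTransGen.mono (fun c d ⟨hcd, hne⟩ => ?_) _ _ h
  refine (SimpleGraph.deleteEdges_adj ..).mpr ⟨⟨(hE c d hcd).ne, .inl hcd⟩, ?_⟩
  rw [Set.mem_singleton_iff, Sym2.eq_iff]
  rintro (h' | ⟨rfl, rfl⟩)
  · exact hne h'
  · exact lt_asymm (hE _ _ hcd) (hE _ _ hij)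

theorem underlyingDeleteEdge_reachable_or {a c : Fin n} (h : ReflTransGen E a c) :
    (underlyingDeleteEdge E i j).Reachable a c ∨ (ReflTransGen E a i ∧ ReflTransGen E j c) :=
  (reflTransGen_avoiding_or_through h).imp_left (underlyingDeleteEdge_reachable hE hij)

theorem underlyingDeleteEdge_reachable_of_lt {a x : Fin n} (h : ReflTransGen E a x)
    (hx : x < j) :
    (underlyingDeleteEdge E i j).Reachable a x :=
  (underlyingDeleteEdge_reachable_or hE hij h).resolve_right fun ⟨_, hjx⟩ =>
    (reflTransGen_le_of_topological hE hjx).not_gt hx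

theorem underlyingDeleteEdge_reachable_of_isPathFromTo {v b : Fin n} {p : List (Fin n)}
    (hp : IsPathFromTo E v p b) (hj : j ∉ p) : (underlyingDeleteEdge E i j).Reachable v b :=
  underlyingDeleteEdge_reachable hE hij <|
    hp.reflTransGen fun _ _ hxy hy => ⟨hxy, fun h => hj (h.2 ▸ hy)⟩

theorem not_underlyingDeleteEdge_reachable (hT : (underlying E).IsTree) :
    ¬ (underlyingDeleteEdge E i j).Reachable i j :=
  SimpleGraph.isBridge_iff.mp <| SimpleGraph.isAcyclic_iff_forall_adj_isBridge.mp hT.isAcyclic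
    ⟨(hE i j hij).ne, .inl hij⟩

theorem not_underlyingDeleteEdge_reachable_of_reflTransGen (hT : (underlying E).IsTree)
    {a c : Fin n} (hac : ReflTransGen E a c) (hic : (underlyingDeleteEdge E i j).Reachable i c) :
    ¬ (underlyingDeleteEdge E i j).Reachable a j := by
  have hcut := not_underlyingDeleteEdge_reachable hE hij hT
  have hjc : ¬ ReflTransGen E j c := fun hjc =>
    match underlyingDeleteEdge_reachable_or hE hij hjc with
    | .inl hjc' => hcut (hic.trans hjc'.symm)
    | .inr ⟨hji, _⟩ => (reflTransGen_le_of_topological hE hji).not_gt (hE i j hij)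
  intro haj
  rcases underlyingDeleteEdge_reachable_or hE hij hac with hac' | ⟨_, hjc'⟩
  · exact hcut (hic.trans (hac'.symm.trans haj))
  · exact hjc hjc'

end EdgeCut

theorem Supported.strictUpper {E : Fin n → Fin n → Prop} (hE : ∀ a b, E a b → a < b)
    {Λ : Matrix (Fin n) (Fin n) ℝ} (hsupp : Supported E Λ) : ∀ a b, b ≤ a → Λ a b = 0 :=
  fun a b hba => hsupp a b fun h => (hE a b h).not_ge hba

theorem Supported.reflTransGen_of_inv_ne_zero {E : Fin n → Fin n → Prop}
    (hE : ∀ a b, E a b → a < b) {Λ : Matrix (Fin n) (Fin n) ℝ} (hsupp : Supported E Λ)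
    {a b : Fin n} (h : (1 - Λ)⁻¹ a b ≠ 0) : Relation.ReflTransGen E a b :=
  Relation.ReflTransGen.mono (fun x y hxy => by_contra fun h' => hxy (hsupp x y h')) _ _
    (reflTransGen_of_inv_one_sub_ne_zero (hsupp.strictUpper hE) h)

theorem momentS_apply (Λ : Matrix (Fin n) (Fin n) ℝ) (ω2 : Fin n → ℝ) (x y : Fin n) :
    momentS Λ ω2 x y = ∑ a, (1 - Λ)⁻¹ a x * ω2 a * (1 - Λ)⁻¹ a y := by
  rw [momentS, mul_apply]
  simp only [mul_diagonal, transpose_apply]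

section PolytreeEdge

open Relation

variable {E : Fin n → Fin n → Prop} (hE : ∀ a b, E a b → a < b) {i j : Fin n} (hij : E i j)
include hE hij

/-- In `N a j = δ_{aj} + ∑ x, N a x * λ_{xj}`, a source `a` on the `i`-side is not `j` and
reaches no parent of `j` other than `i`. -/
theorem inv_one_sub_apply_edge (hT : (underlying E).IsTree) {Λ : Matrix (Fin n) (Fin n) ℝ}
    (hsupp : Supported E Λ) {a c : Fin n} (hic : (underlyingDeleteEdge E i j).Reachable i c)
    (hac : (1 - Λ)⁻¹ a c ≠ 0) : (1 - Λ)⁻¹ a j = Λ i j * (1 - Λ)⁻¹ a i := by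
  have hfar := not_underlyingDeleteEdge_reachable_of_reflTransGen hE hij hT
    (hsupp.reflTransGen_of_inv_ne_zero hE hac) hic
  have haj : a ≠ j := fun h => hfar (by subst h; exact .refl _)
  rw [inv_one_sub_apply (hsupp.strictUpper hE), one_apply_ne haj, zero_add,
    Finset.sum_eq_single i, mul_comm]
  · intro x _ hxi
    by_contra hx
    have hxj : E x j := by_contra fun h => right_ne_zero_of_mul hx (hsupp x j h)
    have hax := hsupp.reflTransGen_of_inv_ne_zero hE (left_ne_zero_of_mul hx)
    exact hfar <| (underlyingDeleteEdge_reachable_of_lt hE hij hax (hE x j hxj)).trans <|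
      underlyingDeleteEdge_reachable hE hij (.single ⟨hxj, fun h => hxi h.1⟩)
  · simp

theorem underlyingDeleteEdge_reachable_of_trek {v k : Fin n} {p q : List (Fin n)}
    (hp : IsPathFromTo E v p i) (hq : IsPathFromTo E v q k) (hjq : j ∈ q → j = v) :
    (underlyingDeleteEdge E i j).Reachable i k := by
  have hvi : ReflTransGen E v i := hp.reflTransGen fun _ _ h _ => h
  have hvj : v < j := (reflTransGen_le_of_topological hE hvi).trans_lt (hE i j hij)
  exact (underlyingDeleteEdge_reachable_of_lt hE hij hvi (hE i j hij)).symm.trans <|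
    underlyingDeleteEdge_reachable_of_isPathFromTo hE hij hq fun h => hvj.ne' (hjq h)

theorem SameTop2.underlyingDeleteEdge_reachable {k : Fin n} (h : SameTop2 E i j k) :
    (underlyingDeleteEdge E i j).Reachable i k := by
  obtain ⟨v, ⟨p, -, ⟨hp, -⟩, -⟩, ⟨p', q, ⟨hp', hq⟩, hsimple⟩⟩ := h
  exact underlyingDeleteEdge_reachable_of_trek hE hij hp hq
    (hsimple j (List.mem_of_mem_getLast? hp'.2.2))

theorem SameTop3.underlyingDeleteEdge_reachable {l m : Fin n} (h : SameTop3 E i j l m) :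
    (underlyingDeleteEdge E i j).Reachable i l ∨ (underlyingDeleteEdge E i j).Reachable i m := by
  obtain ⟨v, ⟨p, -, -, ⟨hp, -⟩, -⟩, ⟨p', q, r, ⟨hp', hq, hr⟩, hsimple⟩⟩ := h
  have hjp' := List.mem_of_mem_getLast? hp'.2.2
  by_cases hjq : j ∈ q
  · exact .inr (underlyingDeleteEdge_reachable_of_trek hE hij hp hr (hsimple j hjp' hjq))
  · exact .inl (underlyingDeleteEdge_reachable_of_trek hE hij hp hq (absurd · hjq))

variable (hT : (underlying E).IsTree) {Λ : Matrix (Fin n) (Fin n) ℝ} (hsupp : Supported E Λ)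
include hT hsupp

theorem momentS_edge (ω2 : Fin n → ℝ) {k : Fin n} (hk : SameTop2 E i j k) :
    momentS Λ ω2 j k = Λ i j * momentS Λ ω2 i k := by
  have hik := hk.underlyingDeleteEdge_reachable hE hij
  simp only [momentS_apply, Finset.mul_sum]
  refine Finset.sum_congr rfl fun a _ => ?_
  by_cases hak : (1 - Λ)⁻¹ a k = 0
  · simp [hak]
  · rw [inv_one_sub_apply_edge hE hij hT hsupp hik hak]
    ring

theorem momentT_edge (ω3 : Fin n → ℝ) {l m : Fin n} (hlm : SameTop3 E i j l m) :
    momentT Λ ω3 j l m = Λ i j * momentT Λ ω3 i l m := by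
  simp only [momentT, Finset.mul_sum]
  refine Finset.sum_congr rfl fun a _ => ?_
  by_cases hal : (1 - Λ)⁻¹ a l = 0
  · simp [hal]
  by_cases ham : (1 - Λ)⁻¹ a m = 0
  · simp [ham]
  rcases hlm.underlyingDeleteEdge_reachable hE hij with hil | him
  · rw [inv_one_sub_apply_edge hE hij hT hsupp hil hal]
    ring
  · rw [inv_one_sub_apply_edge hE hij hT hsupp him ham]
    ring

end PolytreeEdge

theorem momentS_isSymm (Λ : Matrix (Fin n) (Fin n) ℝ) (ω2 : Fin n → ℝ) :
    (momentS Λ ω2).IsSymm := by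
  simp [momentS, IsSymm, Matrix.transpose_mul, Matrix.mul_assoc]

theorem momentT_symmTensor3 (Λ : Matrix (Fin n) (Fin n) ℝ) (ω3 : Fin n → ℝ) :
    SymTensor3 (momentT Λ ω3) := fun _ _ _ =>
  ⟨Finset.sum_congr rfl fun _ _ => by ring, Finset.sum_congr rfl fun _ _ => by ring⟩

theorem eval_svar {S : Matrix (Fin n) (Fin n) ℝ} (hS : S.IsSymm)
    (T : Fin n → Fin n → Fin n → ℝ) (x y : Fin n) : eval (evalVar S T) (svar x y) = S x y := by
  rw [svar, eval_X]
  rcases le_total x y with h | h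
  · simp [evalVar, h]
  · simp [evalVar, h, hS.apply]

theorem eval_tvar (S : Matrix (Fin n) (Fin n) ℝ) {T : Fin n → Fin n → Fin n → ℝ}
    (hT : SymTensor3 T) (x y z : Fin n) : eval (evalVar S T) (tvar x y z) = T x y z := by
  rw [tvar, eval_X]
  simp only [evalVar, mid3]
  rcases le_total x y with h1 | h1 <;> rcases le_total y z with h2 | h2 <;>
    rcases le_total x z with h3 | h3 <;> simp [h1, h2, h3] <;> grind [SymTensor3]

/-- For an edge `i → j` of a polytree, every `2 × 2` minor of the
trek-matrix `A_{i,j}` lies in `I^{≤3}(G)`; concretely, on the model the second row of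
`A_{i,j}` equals `λ_{ij}` times the first row. -/
theorem edge_trek_matrix_rank_one (n : ℕ) (E : Fin n → Fin n → Prop) (hG : IsPolytree E)
    (i j : Fin n) (hij : E i j) :
    (∀ f : MvPolynomial (MomVar n) ℝ, IsTrekMinorOf E i j f → f ∈ momentIdeal E) ∧
    (∀ (Λ : Matrix (Fin n) (Fin n) ℝ) (ω2 ω3 : Fin n → ℝ), Supported E Λ →
      (∀ k, SameTop2 E i j k → momentS Λ ω2 j k = Λ i j * momentS Λ ω2 i k) ∧
      (∀ l m, SameTop3 E i j l m → momentT Λ ω3 j l m = Λ i j * momentT Λ ω3 i l m)) := by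
  obtain ⟨hE, hT⟩ := hG
  have rows (Λ : Matrix (Fin n) (Fin n) ℝ) (ω2 ω3 : Fin n → ℝ) (hsupp : Supported E Λ) :
      (∀ k, SameTop2 E i j k → momentS Λ ω2 j k = Λ i j * momentS Λ ω2 i k) ∧
      (∀ l m, SameTop3 E i j l m → momentT Λ ω3 j l m = Λ i j * momentT Λ ω3 i l m) :=
    ⟨fun _ hk => momentS_edge hE hij hT hsupp ω2 hk,
      fun _ _ hlm => momentT_edge hE hij hT hsupp ω3 hlm⟩
  refine ⟨?_, rows⟩
  rintro f hf S T ⟨Λ, ω2, ω3, hsupp, -, rfl, rfl⟩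
  obtain ⟨hSrow, hTrow⟩ := rows Λ ω2 ω3 hsupp
  have evS := eval_svar (momentS_isSymm Λ ω2) (momentT Λ ω3)
  have evT := eval_tvar (momentS Λ ω2) (momentT_symmTensor3 Λ ω3)
  rcases hf with ⟨k, k', hk, hk', rfl⟩ | ⟨k, l, m, hk, hlm, rfl⟩ | ⟨l, m, l', m', hlm, hlm', rfl⟩
  · simp only [map_sub, _root_.map_mul, evS, hSrow k hk, hSrow k' hk']
    ring
  · simp only [map_sub, _root_.map_mul, evS, evT, hSrow k hk, hTrow l m hlm]
    ring
  · simp only [map_sub, _root_.map_mul, evT, hTrow l m hlm, hTrow l' m' hlm']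
    ring

end LNG
end

section
/- Let G=(V,E) be a polytree. The third-order moment polytope P_G^{(3)} ⊆ ℝ^{|V|+|E|} (with coordinates (z,y)) is exactly the set of solutions of: z_l ≥ 0 for all l∈V; y_{lm} ≥ 0 for all (l,m)∈E; Σ_{l∈V} z_l = 1; 2z_l + Σ_{h∈pa(l)} y_{hl} − y_{lm} ≥ 0 for every edge (l,m)∈E; and 3z_l + Σ_{h∈pa(l)} y_{hl} − Σ_{m∈ch(l)} y_{lm} ≥ 0 for every l∈V, where pa(l) and ch(l) denote the parents and children of l. -/
open MvPolynomial Matrix Finset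

namespace LNG

variable {n : ℕ}

/-- Number of times the edge `(l,m)` is used along a path (counted with multiplicity). -/
def edgeCount (l m : Fin n) : List (Fin n) → ℕ
  | [] => 0
  | [_] => 0
  | a :: b :: rest => (if a = l ∧ b = m then 1 else 0) + edgeCount l m (b :: rest)

/-- The exponent vector `e_{ijk} = (z, y)` of a (simple) 3-trek with top `v` and
paths `p, q, r`: `z` is the indicator of the top, `y_{lm}` counts the uses of the
edge `(l,m)` among the three paths. -/
noncomputable def trekPoint (v : Fin n) (p q r : List (Fin n)) :
    (Fin n → ℝ) × (Fin n → Fin n → ℝ) :=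
  (fun l => if l = v then 1 else 0,
   fun l m => ((edgeCount l m p + edgeCount l m q + edgeCount l m r : ℕ) : ℝ))

/-- The third-order moment polytope `P_G^{(3)}`. -/
noncomputable def momentPolytope (E : Fin n → Fin n → Prop) :
    Set ((Fin n → ℝ) × (Fin n → Fin n → ℝ)) :=
  convexHull ℝ
    {x | ∃ i j k v p q r, IsSimpleTrek3 E v p q r i j k ∧ x = trekPoint v p q r}

/-- The polyhedron `Q_G` cut out by the inequalities of Theorem 6.3 (together with the
vanishing of the coordinates corresponding to non-edges). -/
def QPoly (E : Fin n → Fin n → Prop) [DecidableRel E] :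
    Set ((Fin n → ℝ) × (Fin n → Fin n → ℝ)) :=
  {x | (∀ l, 0 ≤ x.1 l) ∧
       (∀ l m, E l m → 0 ≤ x.2 l m) ∧
       (∀ l m, ¬ E l m → x.2 l m = 0) ∧
       (∑ l, x.1 l) = 1 ∧
       (∀ l m, E l m →
         0 ≤ 2 * x.1 l + (∑ h ∈ Finset.univ.filter (fun h => E h l), x.2 h l) - x.2 l m) ∧
       (∀ l, 0 ≤ 3 * x.1 l + (∑ h ∈ Finset.univ.filter (fun h => E h l), x.2 h l)
          - ∑ m ∈ Finset.univ.filter (fun m => E l m), x.2 l m)}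

/-!
Every trek point satisfies the inequalities: a path from the top `v` to a sink `i` has
out-degree minus in-degree `[l = v] - [l = i]` at `l`, and in a simple trek at most two of the
three paths leave the top along the same edge.

Conversely the inequality system has no recession direction, so by induction on the number of
non-tight inequalities it suffices to find, for each feasible `x`, a trek point that is tight
wherever `x` is. Start at a vertex `v` with `z_v > 0` and walk greedily: leave a vertex along
its tight edge (unique as soon as `z_l` or the inflow is positive), or, if the vertex
inequality is tight, along any edge carrying flow. Two copies of this walk from `v` form two
paths of the trek; the third is trivial, unless the vertex inequality at `v` is tight, when it
is the walk from a second edge at `v` carrying flow. The trek is simple because in a polytree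
two paths leaving `v` along different edges never meet.
-/

section Polyhedron

open AffineMap

variable {V R : Type*} [AddCommGroup V] [Module ℝ V]

def polyhedron (A : AffineSubspace ℝ V) (f : R → V →ₗ[ℝ] ℝ) : Set V :=
  {x | x ∈ A ∧ ∀ r, 0 ≤ f r x}

variable {A : AffineSubspace ℝ V} {f : R → V →ₗ[ℝ] ℝ}

theorem convex_polyhedron : Convex ℝ (polyhedron A f) := by
  have : polyhedron A f = (A : Set V) ∩ ⋂ r, {x | 0 ≤ f r x} := by
    ext x; simp [polyhedron]
  rw [this]
  exact A.convex.inter (convex_iInter fun r => convex_halfSpace_ge (f r).isLinear 0)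

lemma LinearMap.map_lineMap (g : V →ₗ[ℝ] ℝ) (x y : V) (t : ℝ) :
    g (lineMap x y t) = g x + t * (g y - g x) := by
  rw [lineMap_apply_module, map_add, map_smul, map_smul, smul_eq_mul, smul_eq_mul]
  ring

theorem exists_lineMap_mem_polyhedron [Finite R] {x e : V} (hx : x ∈ polyhedron A f)
    (he : e ∈ A) (htight : ∀ r, f r x = 0 → f r e = 0) (hlt : ∃ r, f r x < f r e) :
    ∃ s : ℝ, 0 < s ∧ lineMap x e (-s) ∈ polyhedron A f ∧
      {r | f r (lineMap x e (-s)) ≠ 0} ⊂ {r | f r x ≠ 0} := by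
  have : Nonempty {r // f r x < f r e} := let ⟨r, hr⟩ := hlt; ⟨⟨r, hr⟩⟩
  obtain ⟨⟨r₀, hr₀⟩, hmin⟩ := Finite.exists_min fun r : {r // f r x < f r e} =>
    f r x / (f r e - f r x)
  have hpos : ∀ r, f r x < f r e → 0 < f r x := fun r hr =>
    (hx.2 r).lt_of_ne fun h => hr.ne (by rw [← h, htight r h.symm])
  set s := f r₀ x / (f r₀ e - f r₀ x)
  have hval : ∀ r, f r (lineMap x e (-s)) = f r x - s * (f r e - f r x) := fun r => by
    rw [LinearMap.map_lineMap]; ring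
  have hs : 0 < s := div_pos (hpos r₀ hr₀) (sub_pos.2 hr₀)
  refine ⟨s, hs, ⟨lineMap_mem _ hx.1 he, fun r => ?_⟩, ⟨fun r hr => ?_, fun hsub => ?_⟩⟩
  · rw [hval]
    rcases lt_or_ge (f r x) (f r e) with hr | hr
    · have := hmin ⟨r, hr⟩
      rw [le_div_iff₀ (sub_pos.2 hr)] at this
      linarith
    · nlinarith [hx.2 r]
  · intro h
    apply hr
    rw [hval, h, htight r h]
    ring
  · refine hsub (show f r₀ x ≠ 0 from (hpos r₀ hr₀).ne') ?_
    show f r₀ (lineMap x e (-s)) = 0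
    rw [hval, div_mul_cancel₀ _ (sub_pos.2 hr₀).ne', sub_self]

/-- `hinj` says that the polyhedron is bounded. Each step moves `x` away from `e` until one more
inequality becomes tight; `x` then lies on the segment between `e` and the new point. -/
theorem polyhedron_subset_convexHull [Finite R] {S : Set V} (hSA : S ⊆ A)
    (hinj : ∀ x ∈ A, ∀ y ∈ A, (∀ r, f r x ≤ f r y) → x = y)
    (hface : ∀ x ∈ polyhedron A f, ∃ e ∈ S, ∀ r, f r x = 0 → f r e = 0) :
    polyhedron A f ⊆ convexHull ℝ S := by
  intro x hx
  induction hN : {r | f r x ≠ 0}.ncard using Nat.strong_induction_on generalizing x with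
  | _ N ih =>
  obtain ⟨e, heS, htight⟩ := hface x hx
  by_cases hle : ∀ r, f r e ≤ f r x
  · rw [← hinj e (hSA heS) x hx.1 hle]
    exact subset_convexHull ℝ S heS
  push Not at hle
  obtain ⟨s, hs, hx', hsub⟩ := exists_lineMap_mem_polyhedron hx (hSA heS) htight hle
  have hx'S := ih _ (hN ▸ Set.ncard_lt_ncard hsub) hx' rfl
  have hcomb : lineMap (lineMap x e (-s)) e (s / (1 + s)) = x := by
    simp only [lineMap_apply_module]
    match_scalars <;> field_simp <;> ring
  rw [← hcomb]
  exact (convex_convexHull ℝ S).lineMap_mem hx'S (subset_convexHull ℝ S heS)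
    ⟨by positivity, (div_le_one (by positivity)).2 (by linarith)⟩

end Polyhedron

lemma List.mem_tail_of_head? {α : Type*} {p : List α} {v l : α} (hv : p.head? = some v)
    (hl : l ∈ p) (hlv : l ≠ v) : l ∈ p.tail := by
  rcases p with _ | ⟨a, t⟩
  · simp at hl
  · obtain rfl : a = v := by simpa using hv
    exact List.mem_of_ne_of_mem hlv hl

section Paths

variable {E : Fin n → Fin n → Prop}

def pathIndeg (p : List (Fin n)) (l : Fin n) : ℕ := ∑ h, edgeCount h l p

def pathOutdeg (p : List (Fin n)) (l : Fin n) : ℕ := ∑ m, edgeCount l m p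

lemma edgeCount_cons_cons (l m a b : Fin n) (t : List (Fin n)) :
    edgeCount l m (a :: b :: t) = (if a = l ∧ b = m then 1 else 0) + edgeCount l m (b :: t) :=
  rfl

lemma pathIndeg_cons_cons (a b : Fin n) (t : List (Fin n)) (l : Fin n) :
    pathIndeg (a :: b :: t) l = (if l = b then 1 else 0) + pathIndeg (b :: t) l := by
  unfold pathIndeg
  split_ifs with hb
  · subst hb; simp [edgeCount_cons_cons, Finset.sum_add_distrib]
  · simp [edgeCount_cons_cons, Ne.symm hb]

lemma pathOutdeg_cons_cons (a b : Fin n) (t : List (Fin n)) (l : Fin n) :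
    pathOutdeg (a :: b :: t) l = (if l = a then 1 else 0) + pathOutdeg (b :: t) l := by
  unfold pathOutdeg
  split_ifs with ha
  · subst ha; simp [edgeCount_cons_cons, Finset.sum_add_distrib]
  · simp [edgeCount_cons_cons, Ne.symm ha]

lemma edgeCount_eq_zero_of_not_mem {p : List (Fin n)} {l : Fin n} (hl : l ∉ p) (m : Fin n) :
    edgeCount l m p = 0 := by
  match p, hl with
  | [], _ => rfl
  | [_], _ => rfl
  | a :: b :: t, hl =>
    rw [List.mem_cons, not_or] at hl
    simp [edgeCount_cons_cons, Ne.symm hl.1, edgeCount_eq_zero_of_not_mem hl.2]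

lemma exists_edgeCount_ne_zero_of_mem_tail :
    ∀ {p : List (Fin n)} {l : Fin n}, l ∈ p.tail → ∃ h, edgeCount h l p ≠ 0
  | [], _, hl | [_], _, hl => by simp at hl
  | a :: b :: t, l, hl => by
    rcases List.mem_cons.1 hl with rfl | hl
    · exact ⟨a, by simp [edgeCount_cons_cons]⟩
    · obtain ⟨h, hh⟩ := exists_edgeCount_ne_zero_of_mem_tail (p := b :: t) hl
      exact ⟨h, by rw [edgeCount_cons_cons]; omega⟩

lemma edgeCount_getLast_eq_zero :
    ∀ {p : List (Fin n)} {l : Fin n}, p.Nodup → p.getLast? = some l →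
      ∀ m, edgeCount l m p = 0
  | [], _, _, _, _ | [_], _, _, _, _ => rfl
  | a :: b :: t, l, hp, hl, m => by
    rw [List.getLast?_cons_cons] at hl
    have hal : a ≠ l := fun h => (List.nodup_cons.1 hp).1 (h ▸ List.mem_of_getLast? hl)
    simp [edgeCount_cons_cons, hal, edgeCount_getLast_eq_zero (List.nodup_cons.1 hp).2 hl]

lemma pathIndeg_eq_ite :
    ∀ {p : List (Fin n)}, p.Nodup → ∀ l, pathIndeg p l = if l ∈ p.tail then 1 else 0
  | [], _, _ | [_], _, _ => by simp [pathIndeg, edgeCount]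
  | a :: b :: t, hp, l => by
    have hbt := (List.nodup_cons.1 (List.nodup_cons.1 hp).2).1
    rw [pathIndeg_cons_cons, pathIndeg_eq_ite (List.nodup_cons.1 hp).2]
    by_cases hb : b = l
    · subst hb; simp [hbt]
    · by_cases hl : l ∈ t <;> simp [Ne.symm hb, hl]

lemma pathOutdeg_add_ite_getLast :
    ∀ {p : List (Fin n)} {v : Fin n}, p.head? = some v → ∀ l,
      pathOutdeg p l + (if p.getLast? = some l then 1 else 0) =
        pathIndeg p l + (if l = v then 1 else 0)
  | [], _, hv, _ => by simp at hv
  | [a], v, hv, l => by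
    obtain rfl : a = v := by simpa using hv
    simp [pathOutdeg, pathIndeg, edgeCount, eq_comm]
  | a :: b :: t, v, hv, l => by
    obtain rfl : a = v := by simpa using hv
    have ih := pathOutdeg_add_ite_getLast (p := b :: t) rfl l
    rw [pathOutdeg_cons_cons, pathIndeg_cons_cons, List.getLast?_cons_cons]
    omega

lemma edgeCount_le_pathIndeg {p : List (Fin n)} {v : Fin n} (hv : p.head? = some v)
    (l m : Fin n) : edgeCount l m p ≤ pathIndeg p l + (if l = v then 1 else 0) := calc
  edgeCount l m p ≤ pathOutdeg p l :=
    Finset.single_le_sum (f := fun m => edgeCount l m p) (fun _ _ => Nat.zero_le _)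
      (Finset.mem_univ m)
  _ ≤ _ := (Nat.le_add_right _ _).trans (pathOutdeg_add_ite_getLast hv l).le

lemma IsDiPath.edge_of_edgeCount_ne_zero :
    ∀ {p : List (Fin n)}, IsDiPath E p → ∀ {l m : Fin n}, edgeCount l m p ≠ 0 →
      E l m ∧ m ∈ p.tail
  | [], h, _, _, _ => h.elim
  | [_], _, _, _, hm => by simp [edgeCount] at hm
  | a :: b :: t, ⟨hab, ht⟩, l, m, hm => by
    rw [edgeCount_cons_cons] at hm
    by_cases hc : a = l ∧ b = m
    · obtain ⟨rfl, rfl⟩ := hc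
      exact ⟨hab, List.mem_cons_self⟩
    · have := ht.edge_of_edgeCount_ne_zero (by simpa [hc] using hm)
      exact ⟨this.1, List.mem_cons_of_mem _ this.2⟩

lemma IsDiPath.edgeCount_eq_zero {p : List (Fin n)} (hp : IsDiPath E p) {l m : Fin n}
    (hE : ¬ E l m) : edgeCount l m p = 0 := by
  by_contra h
  exact hE (hp.edge_of_edgeCount_ne_zero h).1

lemma IsDiPath.sum_edgeCount_in [DecidableRel E] {p : List (Fin n)} (hp : IsDiPath E p)
    (l : Fin n) : ∑ h ∈ univ.filter (fun h => E h l), edgeCount h l p = pathIndeg p l :=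
  Finset.sum_subset (Finset.subset_univ _) fun _ _ hh => hp.edgeCount_eq_zero (by simpa using hh)

lemma IsDiPath.sum_edgeCount_out [DecidableRel E] {p : List (Fin n)} (hp : IsDiPath E p)
    (l : Fin n) : ∑ m ∈ univ.filter (fun m => E l m), edgeCount l m p = pathOutdeg p l :=
  Finset.sum_subset (Finset.subset_univ _) fun _ _ hm => hp.edgeCount_eq_zero (by simpa using hm)

lemma IsDiPath.isChain (hlt : ∀ i j, E i j → i < j) :
    ∀ {p : List (Fin n)}, IsDiPath E p → p.IsChain (· < ·)
  | [], _ => List.isChain_nil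
  | [a], _ => List.isChain_singleton a
  | _ :: _ :: _, ⟨hab, ht⟩ => List.IsChain.cons_cons (hlt _ _ hab) (IsDiPath.isChain hlt ht)

lemma IsDiPath.nodup (hlt : ∀ i j, E i j → i < j) {p : List (Fin n)} (hp : IsDiPath E p) :
    p.Nodup :=
  (List.isChain_iff_pairwise.1 (hp.isChain hlt)).imp ne_of_lt

lemma IsDiPath.pathIndeg_head (hlt : ∀ i j, E i j → i < j) {p : List (Fin n)}
    (hp : IsDiPath E p) {v : Fin n} (hv : p.head? = some v) : pathIndeg p v = 0 := by
  rcases p with _ | ⟨a, t⟩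
  · simp at hv
  · obtain rfl : a = v := by simpa using hv
    simp [pathIndeg_eq_ite (hp.nodup hlt), (List.nodup_cons.1 (hp.nodup hlt)).1]

lemma IsDiPath.exists_isPathFromTo {p : List (Fin n)} (hp : IsDiPath E p) {v : Fin n}
    (hv : p.head? = some v) : ∃ i, IsPathFromTo E v p i := by
  have hne : p ≠ [] := by rintro rfl; simp at hv
  exact ⟨p.getLast hne, hp, hv, List.getLast?_eq_some_getLast hne⟩

lemma IsPathFromTo.cons {a b c : Fin n} {p : List (Fin n)} (hab : E a b)
    (hp : IsPathFromTo E b p c) : IsPathFromTo E a (a :: p) c := by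
  obtain ⟨hd, hh, hl⟩ := hp
  rcases p with _ | ⟨b', t⟩
  · simp at hh
  · obtain rfl : b' = b := by simpa using hh
    exact ⟨⟨hab, hd⟩, rfl, by rwa [List.getLast?_cons_cons]⟩

lemma IsDiPath.exists_isPathFromTo_of_mem :
    ∀ {p : List (Fin n)}, IsDiPath E p → ∀ {a w : Fin n}, p.head? = some a → w ∈ p →
      ∃ q, IsPathFromTo E a q w
  | [], h, _, _, _, _ => h.elim
  | [c], _, a, w, ha, hw => by
    obtain rfl : c = a := by simpa using ha
    obtain rfl : w = c := List.mem_singleton.1 hw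
    exact ⟨[w], trivial, rfl, rfl⟩
  | c :: d :: t, ⟨hcd, ht⟩, a, w, ha, hw => by
    obtain rfl : c = a := by simpa using ha
    rcases List.mem_cons.1 hw with rfl | hw
    · exact ⟨[w], trivial, rfl, rfl⟩
    · obtain ⟨q, hq⟩ := ht.exists_isPathFromTo_of_mem rfl hw
      exact ⟨c :: q, hq.cons hcd⟩

end Paths

section Polytree

variable {E : Fin n → Fin n → Prop}

lemma IsPathFromTo.exists_walk (hlt : ∀ i j, E i j → i < j) :
    ∀ {p : List (Fin n)} {a b : Fin n}, IsPathFromTo E a p b →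
      ∃ W : (underlying E).Walk a b, W.support = p
  | [], _, _, ⟨h, _⟩ => h.elim
  | [c], a, b, ⟨_, ha, hb⟩ => by
    obtain rfl : c = a := by simpa using ha
    obtain rfl : c = b := by simpa using hb
    exact ⟨.nil, rfl⟩
  | c :: d :: t, a, b, ⟨⟨hcd, ht⟩, ha, hb⟩ => by
    obtain rfl : c = a := by simpa using ha
    rw [List.getLast?_cons_cons] at hb
    obtain ⟨W, hW⟩ := IsPathFromTo.exists_walk hlt (p := d :: t) ⟨ht, rfl, hb⟩
    have hadj : (underlying E).Adj c d := ⟨(hlt c d hcd).ne, .inl hcd⟩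
    exact ⟨.cons hadj W, by simp [hW]⟩

lemma IsPolytree.eq_of_isPathFromTo (hG : IsPolytree E) {a b : Fin n} {p q : List (Fin n)}
    (hp : IsPathFromTo E a p b) (hq : IsPathFromTo E a q b) : p = q := by
  obtain ⟨W, hW⟩ := hp.exists_walk hG.1
  obtain ⟨W', hW'⟩ := hq.exists_walk hG.1
  have hWp : W.IsPath := by rw [SimpleGraph.Walk.isPath_def, hW]; exact hp.1.nodup hG.1
  have hWp' : W'.IsPath := by rw [SimpleGraph.Walk.isPath_def, hW']; exact hq.1.nodup hG.1
  have := (hG.2.isAcyclic.subsingleton_path a b).elim ⟨W, hWp⟩ ⟨W', hWp'⟩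
  rw [← hW, ← hW']
  exact congrArg (fun P => P.1.support) this

/-- Otherwise the two routes from `v` to a common vertex would close a cycle in the tree. -/
lemma IsPolytree.not_mem_of_mem (hG : IsPolytree E) {v m m' w : Fin n} (hm : E v m)
    (hm' : E v m') (hne : m ≠ m') {p p' : List (Fin n)} (hp : IsDiPath E p)
    (hph : p.head? = some m) (hp' : IsDiPath E p') (hph' : p'.head? = some m') (hw : w ∈ p) :
    w ∉ p' := by
  intro hw'
  obtain ⟨q, hq⟩ := hp.exists_isPathFromTo_of_mem hph hw
  obtain ⟨q', hq'⟩ := hp'.exists_isPathFromTo_of_mem hph' hw'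
  have h := congrArg List.head?
    (List.cons.inj (hG.eq_of_isPathFromTo (hq.cons hm) (hq'.cons hm'))).2
  rw [hq.2.1, hq'.2.1] at h
  exact hne (Option.some.inj h)

end Polytree

abbrev MomentSpace (n : ℕ) := (Fin n → ℝ) × (Fin n → Fin n → ℝ)

def trekPoints (E : Fin n → Fin n → Prop) : Set (MomentSpace n) :=
  {x | ∃ i j k v p q r, IsSimpleTrek3 E v p q r i j k ∧ x = trekPoint v p q r}

section Slack

variable (E : Fin n → Fin n → Prop) [DecidableRel E]

def inflow (x : MomentSpace n) (l : Fin n) : ℝ := ∑ h ∈ univ.filter (fun h => E h l), x.2 h l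

def outflow (x : MomentSpace n) (l : Fin n) : ℝ := ∑ m ∈ univ.filter (fun m => E l m), x.2 l m

def edgeSlack (x : MomentSpace n) (l m : Fin n) : ℝ := 2 * x.1 l + inflow E x l - x.2 l m

def vertexSlack (x : MomentSpace n) (l : Fin n) : ℝ := 3 * x.1 l + inflow E x l - outflow E x l

variable {E} {v : Fin n} {p q r : List (Fin n)}

lemma inflow_trekPoint (hp : IsDiPath E p) (hq : IsDiPath E q) (hr : IsDiPath E r)
    (l : Fin n) :
    inflow E (trekPoint v p q r) l = pathIndeg p l + pathIndeg q l + pathIndeg r l := by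
  simp only [inflow, trekPoint]
  rw [← Nat.cast_sum, Finset.sum_add_distrib, Finset.sum_add_distrib, hp.sum_edgeCount_in,
    hq.sum_edgeCount_in, hr.sum_edgeCount_in]
  push_cast; rfl

lemma outflow_trekPoint (hp : IsDiPath E p) (hq : IsDiPath E q) (hr : IsDiPath E r)
    (l : Fin n) :
    outflow E (trekPoint v p q r) l = pathOutdeg p l + pathOutdeg q l + pathOutdeg r l := by
  simp only [outflow, trekPoint]
  rw [← Nat.cast_sum, Finset.sum_add_distrib, Finset.sum_add_distrib, hp.sum_edgeCount_out,
    hq.sum_edgeCount_out, hr.sum_edgeCount_out]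
  push_cast; rfl

lemma edgeSlack_trekPoint (hp : IsDiPath E p) (hq : IsDiPath E q) (hr : IsDiPath E r)
    (l m : Fin n) :
    edgeSlack E (trekPoint v p q r) l m = 2 * (if l = v then 1 else 0) +
      (((pathIndeg p l : ℝ) - edgeCount l m p) + ((pathIndeg q l : ℝ) - edgeCount l m q) +
        ((pathIndeg r l : ℝ) - edgeCount l m r)) := by
  rw [edgeSlack, inflow_trekPoint hp hq hr]
  simp only [trekPoint]
  push_cast; ring

lemma vertexSlack_trekPoint (hp : IsDiPath E p) (hq : IsDiPath E q) (hr : IsDiPath E r)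
    (hpv : p.head? = some v) (hqv : q.head? = some v) (hrv : r.head? = some v) (l : Fin n) :
    vertexSlack E (trekPoint v p q r) l = (if p.getLast? = some l then 1 else 0) +
      (if q.getLast? = some l then 1 else 0) + (if r.getLast? = some l then 1 else 0) := by
  have hP := congrArg (Nat.cast (R := ℝ)) (pathOutdeg_add_ite_getLast hpv l)
  have hQ := congrArg (Nat.cast (R := ℝ)) (pathOutdeg_add_ite_getLast hqv l)
  have hR := congrArg (Nat.cast (R := ℝ)) (pathOutdeg_add_ite_getLast hrv l)
  push_cast at hP hQ hR
  rw [vertexSlack, inflow_trekPoint hp hq hr, outflow_trekPoint hp hq hr]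
  simp only [trekPoint]
  split_ifs at hP hQ hR ⊢ <;> linarith

lemma edgeSlack_trekPoint_nonneg (hlt : ∀ i j, E i j → i < j) {i j k : Fin n}
    (h : IsSimpleTrek3 E v p q r i j k) {l m : Fin n} (hlm : E l m) :
    0 ≤ edgeSlack E (trekPoint v p q r) l m := by
  obtain ⟨⟨⟨hp, hpv, -⟩, ⟨hq, hqv, -⟩, ⟨hr, hrv, -⟩⟩, hsimple⟩ := h
  rw [edgeSlack_trekPoint hp hq hr]
  have hP := edgeCount_le_pathIndeg hpv l m
  have hQ := edgeCount_le_pathIndeg hqv l m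
  have hR := edgeCount_le_pathIndeg hrv l m
  by_cases hl : l = v
  · subst hl
    have hnot : ¬ (edgeCount l m p ≠ 0 ∧ edgeCount l m q ≠ 0 ∧ edgeCount l m r ≠ 0) :=
      fun ⟨h1, h2, h3⟩ => (hlt l m hlm).ne' <| hsimple m
        (List.mem_of_mem_tail (hp.edge_of_edgeCount_ne_zero h1).2)
        (List.mem_of_mem_tail (hq.edge_of_edgeCount_ne_zero h2).2)
        (List.mem_of_mem_tail (hr.edge_of_edgeCount_ne_zero h3).2)
    rw [hp.pathIndeg_head hlt hpv, hq.pathIndeg_head hlt hqv, hr.pathIndeg_head hlt hrv] at *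
    have : edgeCount l m p + edgeCount l m q + edgeCount l m r ≤ 2 := by
      simp at hP hQ hR; omega
    have : ((edgeCount l m p + edgeCount l m q + edgeCount l m r : ℕ) : ℝ) ≤ 2 := by
      exact_mod_cast this
    push_cast at this ⊢
    simp only [if_true]
    linarith
  · simp only [if_neg hl, add_zero, mul_zero, zero_add] at hP hQ hR ⊢
    have hP' : (edgeCount l m p : ℝ) ≤ pathIndeg p l := by exact_mod_cast hP
    have hQ' : (edgeCount l m q : ℝ) ≤ pathIndeg q l := by exact_mod_cast hQ
    have hR' : (edgeCount l m r : ℝ) ≤ pathIndeg r l := by exact_mod_cast hR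
    linarith

lemma trekPoint_mem_QPoly (hlt : ∀ i j, E i j → i < j) {i j k : Fin n}
    (h : IsSimpleTrek3 E v p q r i j k) : trekPoint v p q r ∈ QPoly E := by
  have ⟨⟨⟨hp, hpv, _⟩, ⟨hq, hqv, _⟩, ⟨hr, hrv, _⟩⟩, _⟩ := h
  refine ⟨fun l => ?_, fun l m _ => ?_, fun l m hlm => ?_, ?_,
    fun l m hlm => edgeSlack_trekPoint_nonneg hlt h hlm, fun l => ?_⟩
  · simp only [trekPoint]; positivity
  · simp only [trekPoint]; positivity
  · simp [trekPoint, hp.edgeCount_eq_zero hlm, hq.edgeCount_eq_zero hlm, hr.edgeCount_eq_zero hlm]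
  · simp [trekPoint]
  · show 0 ≤ vertexSlack E _ l
    rw [vertexSlack_trekPoint hp hq hr hpv hqv hrv]
    positivity

lemma trekPoints_subset_QPoly (hlt : ∀ i j, E i j → i < j) : trekPoints E ⊆ QPoly E := by
  rintro _ ⟨i, j, k, v, p, q, r, h, rfl⟩
  exact trekPoint_mem_QPoly hlt h

end Slack

def QPlane (E : Fin n → Fin n → Prop) : AffineSubspace ℝ (MomentSpace n) where
  carrier := {x | ∑ l, x.1 l = 1 ∧ ∀ l m, ¬ E l m → x.2 l m = 0}
  smul_vsub_vadd_mem' := by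
    rintro c x y z ⟨hx, hx'⟩ ⟨hy, hy'⟩ ⟨hz, hz'⟩
    refine ⟨?_, fun l m hlm => ?_⟩
    · simp [Finset.sum_add_distrib, ← Finset.mul_sum, hx, hy, hz]
    · simp [hx' l m hlm, hy' l m hlm, hz' l m hlm]

abbrev QRow (E : Fin n → Fin n → Prop) :=
  Fin n ⊕ (Fin n × Fin n) ⊕ {e : Fin n × Fin n // E e.1 e.2} ⊕ Fin n

section Representation

variable (E : Fin n → Fin n → Prop) [DecidableRel E]

def QRow.eval : QRow E → MomentSpace n → ℝ
  | .inl l, x => x.1 l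
  | .inr (.inl (l, m)), x => x.2 l m
  | .inr (.inr (.inl e)), x => edgeSlack E x e.1.1 e.1.2
  | .inr (.inr (.inr l)), x => vertexSlack E x l

def qRow (r : QRow E) : MomentSpace n →ₗ[ℝ] ℝ where
  toFun := QRow.eval E r
  map_add' x y := by
    rcases r with l | ⟨l, m⟩ | ⟨⟨l, m⟩, _⟩ | l <;>
      simp [QRow.eval, edgeSlack, vertexSlack, inflow, outflow, Finset.sum_add_distrib] <;> ring
  map_smul' c x := by
    rcases r with l | ⟨l, m⟩ | ⟨⟨l, m⟩, _⟩ | l <;>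
      simp [QRow.eval, edgeSlack, vertexSlack, inflow, outflow, ← Finset.mul_sum] <;> ring

theorem QPoly_eq_polyhedron : QPoly E = polyhedron (QPlane E) (qRow E) := by
  ext x
  constructor
  · rintro ⟨hz, hy, hy0, hsum, hedge, hvertex⟩
    refine ⟨⟨hsum, hy0⟩, ?_⟩
    rintro (l | ⟨l, m⟩ | ⟨⟨l, m⟩, hlm⟩ | l)
    · exact hz l
    · by_cases hlm : E l m
      · exact hy l m hlm
      · exact (hy0 l m hlm).ge
    · exact hedge l m hlm
    · exact hvertex l
  · rintro ⟨⟨hsum, hy0⟩, h⟩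
    exact ⟨fun l => h (.inl l), fun l m _ => h (.inr (.inl (l, m))), hy0, hsum,
      fun l m hlm => h (.inr (.inr (.inl ⟨(l, m), hlm⟩))), fun l => h (.inr (.inr (.inr l)))⟩

variable {E}

/-- The edge inequalities bound `y_lm` by the flow into `l`, so along a topological order the
rows of a point of `QPlane E` determine it: the polyhedron is bounded. -/
theorem eq_of_qRow_le (hlt : ∀ i j, E i j → i < j) {x x' : MomentSpace n}
    (hx : x ∈ QPlane E) (hx' : x' ∈ QPlane E) (hle : ∀ r, qRow E r x ≤ qRow E r x') :
    x = x' := by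
  have hz : x.1 = x'.1 := funext fun l =>
    (Finset.sum_eq_sum_iff_of_le fun l _ => hle (.inl l)).1 (hx.1.trans hx'.1.symm) l
      (Finset.mem_univ l)
  have hy : ∀ l m, x.2 l m = x'.2 l m := by
    intro l
    induction l using WellFoundedLT.induction with
    | _ l ih =>
    have hin : inflow E x l = inflow E x' l :=
      Finset.sum_congr rfl fun h hh => ih h (hlt h l (Finset.mem_filter.1 hh).2) l
    intro m
    by_cases hlm : E l m
    · have h1 : edgeSlack E x l m ≤ edgeSlack E x' l m :=
        hle (.inr (.inr (.inl ⟨(l, m), hlm⟩)))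
      have h2 : x.2 l m ≤ x'.2 l m := hle (.inr (.inl (l, m)))
      rw [edgeSlack, edgeSlack, hin, hz] at h1
      linarith
    · rw [hx.2 l m hlm, hx'.2 l m hlm]
  exact Prod.ext hz (funext fun l => funext (hy l))

end Representation

section Greedy

variable (E : Fin n → Fin n → Prop) [DecidableRel E] (x : MomentSpace n)

open Classical in
/-- Leave `l` along a tight edge carrying flow if there is one (it is unique once
`z_l + inflow > 0`, see `greedyStep_eq_some`); otherwise, if the vertex inequality is tight,
along any edge carrying flow; otherwise stop. -/
noncomputable def greedyStep (l : Fin n) : Option (Fin n) :=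
  if h : ∃ m, l < m ∧ E l m ∧ 0 < x.2 l m ∧ edgeSlack E x l m = 0 then some h.choose
  else if h : vertexSlack E x l = 0 ∧ ∃ m, l < m ∧ E l m ∧ 0 < x.2 l m then some h.2.choose
  else none

variable {E x}

lemma greedyStep_spec {l m : Fin n} (h : greedyStep E x l = some m) :
    l < m ∧ E l m ∧ 0 < x.2 l m := by
  unfold greedyStep at h
  split_ifs at h with h₁ h₂
  · cases h
    exact ⟨h₁.choose_spec.1, h₁.choose_spec.2.1, h₁.choose_spec.2.2.1⟩
  · cases h
    exact h₂.2.choose_spec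

variable (E x) in
noncomputable def greedyPath (l : Fin n) : List (Fin n) :=
  match h : greedyStep E x l with
  | none => [l]
  | some m =>
    have := (greedyStep_spec h).1
    l :: greedyPath m
termination_by n - l
decreasing_by omega

lemma greedyPath_of_none {l : Fin n} (h : greedyStep E x l = none) : greedyPath E x l = [l] := by
  rw [greedyPath]; split <;> simp_all

lemma greedyPath_of_some {l m : Fin n} (h : greedyStep E x l = some m) :
    greedyPath E x l = l :: greedyPath E x m := by
  rw [greedyPath]; split <;> simp_all

lemma exists_greedyPath_eq_cons (l : Fin n) : ∃ t, greedyPath E x l = l :: t := by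
  rcases h : greedyStep E x l with _ | m
  · exact ⟨[], greedyPath_of_none h⟩
  · exact ⟨_, greedyPath_of_some h⟩

lemma head?_greedyPath (l : Fin n) : (greedyPath E x l).head? = some l := by
  obtain ⟨t, ht⟩ := exists_greedyPath_eq_cons (E := E) (x := x) l
  rw [ht]; rfl

lemma mem_greedyPath_self (l : Fin n) : l ∈ greedyPath E x l :=
  List.mem_of_mem_head? (head?_greedyPath l)

lemma le_of_mem_greedyPath {l w : Fin n} (hw : w ∈ greedyPath E x l) : l ≤ w := by
  induction l using greedyPath.induct E x with
  | case1 l h => rw [greedyPath_of_none h, List.mem_singleton] at hw; exact hw.ge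
  | case2 l m h hlm ih =>
    rw [greedyPath_of_some h, List.mem_cons] at hw
    rcases hw with rfl | hw
    · exact le_rfl
    · exact hlm.le.trans (ih hw)

lemma not_mem_greedyPath_of_lt {v m : Fin n} (h : v < m) : v ∉ greedyPath E x m :=
  fun hv => (le_of_mem_greedyPath hv).not_gt h

lemma getLast?_cons_greedyPath_ne {v m : Fin n} (hvm : v < m) :
    (v :: greedyPath E x m).getLast? ≠ some v := by
  obtain ⟨t, ht⟩ := exists_greedyPath_eq_cons (E := E) (x := x) m
  rw [ht, List.getLast?_cons_cons, ← ht]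
  exact fun h => not_mem_greedyPath_of_lt hvm (List.mem_of_getLast? h)

lemma edgeCount_cons_greedyPath (v s a b : Fin n) :
    edgeCount a b (v :: greedyPath E x s) =
      (if v = a ∧ s = b then 1 else 0) + edgeCount a b (greedyPath E x s) := by
  obtain ⟨t, ht⟩ := exists_greedyPath_eq_cons (E := E) (x := x) s
  rw [ht, edgeCount_cons_cons]

lemma isDiPath_greedyPath (l : Fin n) : IsDiPath E (greedyPath E x l) := by
  induction l using greedyPath.induct E x with
  | case1 l h => rw [greedyPath_of_none h]; trivial
  | case2 l m h _ ih =>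
    obtain ⟨t, ht⟩ := exists_greedyPath_eq_cons (E := E) (x := x) m
    rw [greedyPath_of_some h, ht]
    exact ⟨(greedyStep_spec h).2.1, ht ▸ ih⟩

lemma edgeCount_greedyPath (s a b : Fin n) : edgeCount a b (greedyPath E x s) =
    if a ∈ greedyPath E x s ∧ greedyStep E x a = some b then 1 else 0 := by
  induction s using greedyPath.induct E x with
  | case1 s h =>
    rw [greedyPath_of_none h]
    by_cases ha : a = s
    · subst ha; simp [edgeCount, h]
    · simp [edgeCount, ha]
  | case2 s m h hsm ih =>
    rw [greedyPath_of_some h, edgeCount_cons_greedyPath, ih]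
    by_cases ha : a = s
    · subst ha
      by_cases hb : m = b
      · subst hb; simp [not_mem_greedyPath_of_lt hsm, h]
      · simp [not_mem_greedyPath_of_lt hsm, h, hb]
    · simp [ha, Ne.symm ha]

lemma pos_of_edgeCount_greedyPath {s a b : Fin n} (h : edgeCount a b (greedyPath E x s) ≠ 0) :
    0 < x.2 a b := by
  rw [edgeCount_greedyPath] at h
  split_ifs at h with hab
  · exact (greedyStep_spec hab.2).2.2
  · exact (h rfl).elim

lemma inflow_nonneg (hx : x ∈ QPoly E) (l : Fin n) : 0 ≤ inflow E x l :=
  Finset.sum_nonneg fun h hh => hx.2.1 h l (Finset.mem_filter.1 hh).2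

lemma inflow_pos (hx : x ∈ QPoly E) {h l : Fin n} (hE : E h l) (hpos : 0 < x.2 h l) :
    0 < inflow E x l :=
  hpos.trans_le <| Finset.single_le_sum (f := fun h => x.2 h l)
    (fun i hi => hx.2.1 i l (Finset.mem_filter.1 hi).2) (by simpa using hE)

/-- Two tight edges at `l` would carry more flow than the vertex inequality allows. -/
lemma eq_of_edgeSlack_eq_zero (hx : x ∈ QPoly E) {l m m' : Fin n}
    (hpos : 0 < x.1 l + inflow E x l) (hm : E l m) (hm' : E l m')
    (h : edgeSlack E x l m = 0) (h' : edgeSlack E x l m' = 0) : m = m' := by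
  by_contra hne
  have hsub : x.2 l m + x.2 l m' ≤ outflow E x l := by
    rw [← Finset.sum_pair hne]
    refine Finset.sum_le_sum_of_subset_of_nonneg ?_ fun i hi _ => hx.2.1 l i (by simpa using hi)
    simp [Finset.insert_subset_iff, hm, hm']
  have hvertex : 0 ≤ vertexSlack E x l := hx.2.2.2.2.2 l
  rw [vertexSlack] at hvertex
  rw [edgeSlack] at h h'
  linarith [hx.1 l]

lemma greedyStep_eq_some (hlt : ∀ i j, E i j → i < j) (hx : x ∈ QPoly E) {l m : Fin n}
    (hpos : 0 < x.1 l + inflow E x l) (hE : E l m) (ht : edgeSlack E x l m = 0) :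
    greedyStep E x l = some m := by
  have hy : 0 < x.2 l m := by
    rw [edgeSlack] at ht; linarith [hx.1 l]
  have h : ∃ m, l < m ∧ E l m ∧ 0 < x.2 l m ∧ edgeSlack E x l m = 0 :=
    ⟨m, hlt l m hE, hE, hy, ht⟩
  rw [greedyStep, dif_pos h]
  exact congrArg some (eq_of_edgeSlack_eq_zero hx hpos h.choose_spec.2.1 hE
    h.choose_spec.2.2.2 ht)

lemma greedyStep_ne_none (hlt : ∀ i j, E i j → i < j) (hx : x ∈ QPoly E) {l : Fin n}
    (hpos : 0 < x.1 l + inflow E x l) (ht : vertexSlack E x l = 0) : greedyStep E x l ≠ none := by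
  have hout : outflow E x l ≠ 0 := by
    rw [vertexSlack] at ht; linarith [hx.1 l, inflow_nonneg hx l]
  obtain ⟨m, hm, hne⟩ := Finset.exists_ne_zero_of_sum_ne_zero hout
  have hE : E l m := (Finset.mem_filter.1 hm).2
  unfold greedyStep
  split_ifs with h₁ h₂
  · simp
  · simp
  · exact (h₂ ⟨ht, m, hlt l m hE, hE, (hx.2.1 l m hE).lt_of_ne' hne⟩).elim

end Greedy

section GreedyTrek

variable (E : Fin n → Fin n → Prop) [DecidableRel E] (x : MomentSpace n)

structure IsGreedyPath (v : Fin n) (P : List (Fin n)) : Prop where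
  isDiPath : IsDiPath E P
  head : P.head? = some v
  pos : ∀ a b, edgeCount a b P ≠ 0 → 0 < x.2 a b
  follows : ∀ l ∈ P, l ≠ v → ∀ m,
    edgeCount l m P = if greedyStep E x l = some m then 1 else 0

variable {E x}

lemma isGreedyPath_singleton (v : Fin n) : IsGreedyPath E x v [v] :=
  ⟨trivial, rfl, fun _ _ h => (h rfl).elim,
    fun _ hl hlv => (hlv (List.mem_singleton.1 hl)).elim⟩

lemma isGreedyPath_greedyPath (v : Fin n) : IsGreedyPath E x v (greedyPath E x v) :=
  ⟨isDiPath_greedyPath v, head?_greedyPath v, fun _ _ => pos_of_edgeCount_greedyPath,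
    fun l hl _ m => by rw [edgeCount_greedyPath, if_congr (and_iff_right hl) rfl rfl]⟩

lemma isGreedyPath_cons {v m : Fin n} (hE : E v m) (hpos : 0 < x.2 v m) :
    IsGreedyPath E x v (v :: greedyPath E x m) := by
  refine ⟨?_, rfl, fun a b hab => ?_, fun l hl hlv b => ?_⟩
  · obtain ⟨t, ht⟩ := exists_greedyPath_eq_cons (E := E) (x := x) m
    rw [ht]
    exact ⟨hE, ht ▸ isDiPath_greedyPath m⟩
  · rw [edgeCount_cons_greedyPath] at hab
    by_cases h : v = a ∧ m = b
    · obtain ⟨rfl, rfl⟩ := h; exact hpos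
    · exact pos_of_edgeCount_greedyPath (by simpa [h] using hab)
  · have hl' := (List.mem_cons.1 hl).resolve_left hlv
    rw [edgeCount_cons_greedyPath, if_neg fun h => hlv h.1.symm, zero_add, edgeCount_greedyPath,
      if_congr (and_iff_right hl') rfl rfl]

variable {v : Fin n} {P : List (Fin n)}

namespace IsGreedyPath

lemma inflow_pos (hx : x ∈ QPoly E) (hP : IsGreedyPath E x v P) {l : Fin n} (hl : l ∈ P)
    (hlv : l ≠ v) : 0 < inflow E x l := by
  obtain ⟨h, hh⟩ := exists_edgeCount_ne_zero_of_mem_tail (List.mem_tail_of_head? hP.head hl hlv)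
  exact _root_.LNG.inflow_pos hx (hP.isDiPath.edge_of_edgeCount_ne_zero hh).1 (hP.pos h l hh)

lemma pathIndeg_eq_edgeCount (hlt : ∀ i j, E i j → i < j) (hx : x ∈ QPoly E)
    (hP : IsGreedyPath E x v P) {l m : Fin n} (hlv : l ≠ v) (hE : E l m)
    (ht : edgeSlack E x l m = 0) : pathIndeg P l = edgeCount l m P := by
  rw [pathIndeg_eq_ite (hP.isDiPath.nodup hlt)]
  by_cases hl : l ∈ P
  · have hstep := greedyStep_eq_some hlt hx
      (by linarith [hx.1 l, hP.inflow_pos hx hl hlv]) hE ht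
    rw [hP.follows l hl hlv, if_pos (List.mem_tail_of_head? hP.head hl hlv), if_pos hstep]
  · rw [edgeCount_eq_zero_of_not_mem hl, if_neg fun h => hl (List.mem_of_mem_tail h)]

lemma getLast?_ne (hlt : ∀ i j, E i j → i < j) (hx : x ∈ QPoly E) (hP : IsGreedyPath E x v P)
    {l : Fin n} (hlv : l ≠ v) (ht : vertexSlack E x l = 0) : P.getLast? ≠ some l := by
  intro hlast
  have hl := List.mem_of_getLast? hlast
  obtain ⟨m, hm⟩ := Option.ne_none_iff_exists'.1 <| greedyStep_ne_none hlt hx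
    (by linarith [hx.1 l, hP.inflow_pos hx hl hlv]) ht
  have := hP.follows l hl hlv m
  rw [edgeCount_getLast_eq_zero (hP.isDiPath.nodup hlt) hlast, if_pos hm] at this
  exact zero_ne_one this

end IsGreedyPath

lemma trekPoint_mem_trekPoints {P Q R : List (Fin n)} (hP : IsGreedyPath E x v P)
    (hQ : IsGreedyPath E x v Q) (hR : IsGreedyPath E x v R)
    (hsimple : ∀ w ∈ P, w ∈ Q → w ∈ R → w = v) :
    trekPoint v P Q R ∈ trekPoints E := by
  obtain ⟨i, hi⟩ := hP.isDiPath.exists_isPathFromTo hP.head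
  obtain ⟨j, hj⟩ := hQ.isDiPath.exists_isPathFromTo hQ.head
  obtain ⟨k, hk⟩ := hR.isDiPath.exists_isPathFromTo hR.head
  exact ⟨i, j, k, v, P, Q, R, ⟨⟨hi, hj, hk⟩, hsimple⟩, rfl⟩

theorem qRow_trekPoint_eq_zero (hlt : ∀ i j, E i j → i < j) (hx : x ∈ QPoly E)
    (hv : 0 < x.1 v) {P Q R : List (Fin n)}
    (hP : IsGreedyPath E x v P) (hQ : IsGreedyPath E x v Q) (hR : IsGreedyPath E x v R)
    (htopEdge : ∀ m, greedyStep E x v = some m →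
      edgeCount v m P + edgeCount v m Q + edgeCount v m R = 2)
    (htopVertex : vertexSlack E x v = 0 →
      P.getLast? ≠ some v ∧ Q.getLast? ≠ some v ∧ R.getLast? ≠ some v)
    (r : QRow E) (hr : qRow E r x = 0) : qRow E r (trekPoint v P Q R) = 0 := by
  rcases r with l | ⟨l, m⟩ | ⟨⟨l, m⟩, hE⟩ | l
  · have hlv : l ≠ v := by rintro rfl; exact hv.ne' hr
    simp [qRow, QRow.eval, trekPoint, hlv]
  · have hzero : ∀ S : List (Fin n), IsGreedyPath E x v S → edgeCount l m S = 0 :=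
      fun S hS => by_contra fun h => (hS.pos l m h).ne' hr
    simp [qRow, QRow.eval, trekPoint, hzero P hP, hzero Q hQ, hzero R hR]
  · change edgeSlack E x l m = 0 at hr
    change edgeSlack E _ l m = 0
    rw [edgeSlack_trekPoint hP.isDiPath hQ.isDiPath hR.isDiPath]
    by_cases hlv : l = v
    · subst hlv
      have hstep := greedyStep_eq_some hlt hx (by linarith [inflow_nonneg hx l]) hE hr
      have htop : ((edgeCount l m P + edgeCount l m Q + edgeCount l m R : ℕ) : ℝ) = 2 := by
        exact_mod_cast htopEdge m hstep
      rw [hP.isDiPath.pathIndeg_head hlt hP.head, hQ.isDiPath.pathIndeg_head hlt hQ.head,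
        hR.isDiPath.pathIndeg_head hlt hR.head]
      push_cast at htop ⊢
      simp only [if_true]
      linarith
    · rw [hP.pathIndeg_eq_edgeCount hlt hx hlv hE hr, hQ.pathIndeg_eq_edgeCount hlt hx hlv hE hr,
        hR.pathIndeg_eq_edgeCount hlt hx hlv hE hr, if_neg hlv]
      ring
  · change vertexSlack E x l = 0 at hr
    change vertexSlack E _ l = 0
    rw [vertexSlack_trekPoint hP.isDiPath hQ.isDiPath hR.isDiPath hP.head hQ.head hR.head]
    obtain ⟨hPl, hQl, hRl⟩ :
        P.getLast? ≠ some l ∧ Q.getLast? ≠ some l ∧ R.getLast? ≠ some l := by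
      by_cases hlv : l = v
      · subst hlv; exact htopVertex hr
      · exact ⟨hP.getLast?_ne hlt hx hlv hr, hQ.getLast?_ne hlt hx hlv hr,
          hR.getLast?_ne hlt hx hlv hr⟩
    simp [hPl, hQl, hRl]

lemma exists_second_edge (hx : x ∈ QPoly E) {m₁ : Fin n} (hv : 0 < x.1 v)
    (hvt : vertexSlack E x v = 0) (hE₁ : E v m₁) :
    ∃ m₂, m₂ ≠ m₁ ∧ E v m₂ ∧ 0 < x.2 v m₂ := by
  have hmem : m₁ ∈ univ.filter (fun m => E v m) := by simpa using hE₁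
  have hedge : 0 ≤ edgeSlack E x v m₁ := hx.2.2.2.2.1 v m₁ hE₁
  have hsplit : x.2 v m₁ + ∑ m ∈ (univ.filter (fun m => E v m)).erase m₁, x.2 v m =
      outflow E x v := Finset.add_sum_erase _ _ hmem
  rw [vertexSlack] at hvt
  rw [edgeSlack] at hedge
  obtain ⟨m₂, hm₂, hne⟩ := Finset.exists_ne_zero_of_sum_ne_zero
    (s := (univ.filter _).erase m₁) (f := fun m => x.2 v m) (by linarith)
  obtain ⟨hne₁, hm₂⟩ := Finset.mem_erase.1 hm₂
  have hE₂ : E v m₂ := (Finset.mem_filter.1 hm₂).2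
  exact ⟨m₂, hne₁, hE₂, (hx.2.1 v m₂ hE₂).lt_of_ne' hne⟩

theorem exists_trekPoint_qRow_eq_zero (hG : IsPolytree E) (hx : x ∈ QPoly E) :
    ∃ e ∈ trekPoints E, ∀ r, qRow E r x = 0 → qRow E r e = 0 := by
  have hlt := hG.1
  obtain ⟨v, -, hv⟩ := Finset.exists_ne_zero_of_sum_ne_zero (hx.2.2.2.1 ▸ one_ne_zero :
    ∑ l, x.1 l ≠ 0)
  replace hv : 0 < x.1 v := (hx.1 v).lt_of_ne' hv
  have hP := isGreedyPath_greedyPath (E := E) (x := x) v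
  by_cases hvt : vertexSlack E x v = 0
  · obtain ⟨m₁, hm₁⟩ := Option.ne_none_iff_exists'.1 <|
      greedyStep_ne_none hlt hx (by linarith [inflow_nonneg hx v]) hvt
    obtain ⟨hvm₁, hE₁, -⟩ := greedyStep_spec hm₁
    obtain ⟨m₂, hne, hE₂, hpos₂⟩ := exists_second_edge hx hv hvt hE₁
    have hvm₂ := hlt v m₂ hE₂
    refine ⟨_, trekPoint_mem_trekPoints hP hP (isGreedyPath_cons hE₂ hpos₂) ?_,
      qRow_trekPoint_eq_zero hlt hx hv hP hP (isGreedyPath_cons hE₂ hpos₂) ?_ ?_⟩ <;>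
      rw [greedyPath_of_some hm₁]
    · rintro w (_ | ⟨_, hw⟩) - (_ | ⟨_, hw'⟩)
      · rfl
      · rfl
      · rfl
      · exact (hG.not_mem_of_mem hE₁ hE₂ (Ne.symm hne) (isDiPath_greedyPath m₁)
          (head?_greedyPath m₁) (isDiPath_greedyPath m₂) (head?_greedyPath m₂) hw hw').elim
    · intro m hm
      obtain rfl : m₁ = m := Option.some.inj (hm₁.symm.trans hm)
      simp [edgeCount_cons_greedyPath, hne, edgeCount_eq_zero_of_not_mem
        (not_mem_greedyPath_of_lt hvm₁), edgeCount_eq_zero_of_not_mem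
        (not_mem_greedyPath_of_lt hvm₂)]
    · exact fun _ => ⟨getLast?_cons_greedyPath_ne hvm₁, getLast?_cons_greedyPath_ne hvm₁,
        getLast?_cons_greedyPath_ne hvm₂⟩
  · refine ⟨_, trekPoint_mem_trekPoints hP hP (isGreedyPath_singleton v) ?_,
      qRow_trekPoint_eq_zero hlt hx hv hP hP (isGreedyPath_singleton v) ?_ (absurd · hvt)⟩
    · exact fun w _ _ hw => List.mem_singleton.1 hw
    · intro m hm
      simp [edgeCount_greedyPath, mem_greedyPath_self, hm, edgeCount]

end GreedyTrek

/-- For a polytree, the third-order moment polytope is exactly the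
solution set of the displayed equations and inequalities. -/
theorem moment_polytope_eq (n : ℕ) (E : Fin n → Fin n → Prop) [DecidableRel E]
    (hG : IsPolytree E) : momentPolytope E = QPoly E := by
  apply Set.Subset.antisymm
  · exact convexHull_min (trekPoints_subset_QPoly hG.1)
      (QPoly_eq_polyhedron E ▸ convex_polyhedron)
  · rw [QPoly_eq_polyhedron]
    refine polyhedron_subset_convexHull (fun e he => ?_)
      (fun x hx y hy => eq_of_qRow_le hG.1 hx hy) (fun x hx => ?_)
    · exact (QPoly_eq_polyhedron E ▸ trekPoints_subset_QPoly hG.1 he).1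
    · exact exists_trekPoint_qRow_eq_zero hG ((QPoly_eq_polyhedron E).symm ▸ hx)

end LNG
end
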